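/- arXiv:2210.11864 — 2 statements merged into one kernel-verified Lean document; each statement's English description precedes it below -/
import Mathlib

section
/- Let t ≥ 2, let r = 2t or r = 2t + 1, let 2 ≤ s ≤ r, set ℓ = 2s − 1, and let n ≥ 2r − 1. Then there exists a permutation π of Fin n with |support π| = 2r − 1 whose cycle type consists of r − s parts equal to 2 together with one part equal to ℓ, such that |N_3(π)| = ℓ · Σ_{i=1}^{s−1} C(r−s, t−i) if r = 2t, and |N_3(π)| = ℓ · Σ_{i=1}^{s−2} C(r−s, t−i) if r = 2t + 1. -/
open Equiv Equiv.Perm Finset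
open scoped Fin.NatCast Fin.CommRing

lemma cycleType_of_sq_eq_one {β : Type*} [Fintype β] [DecidableEq β] {σ : Equiv.Perm β}
    (h : σ * σ = 1) {k : ℕ} (hc : σ.support.card = 2 * k) :
    σ.cycleType = Multiset.replicate k 2 := by
  have hall : ∀ x ∈ σ.cycleType, x = 2 := by
    intro x hx
    have h2 : 2 ≤ x := Equiv.Perm.two_le_of_mem_cycleType hx
    have hdvd : x ∣ orderOf σ := by
      rw [← Equiv.Perm.lcm_cycleType]; exact Multiset.dvd_lcm hx
    have ho : orderOf σ ∣ 2 := orderOf_dvd_of_pow_eq_one (by rwa [pow_two])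
    have hx2 : x ∣ 2 := hdvd.trans ho
    have := Nat.le_of_dvd (by norm_num) hx2
    omega
  have hrep := Multiset.eq_replicate_of_mem hall
  rw [hrep]
  congr 1
  have hsum := Equiv.Perm.sum_cycleType σ
  rw [hrep, Multiset.sum_replicate, smul_eq_mul, hc, mul_comm] at hsum
  omega



lemma arc_structure {L : ℕ} {W : Finset (Fin (L + 2))} {j : Fin (L + 2)}
    (hj : j ∈ W) (hj1 : j + 1 ∉ W)
    (hcl : ∀ c ∈ W, c ≠ j → c + 1 ∈ W) :
    W.card ≤ L + 1 ∧
      W = (Finset.range W.card).image (fun c : ℕ => j - (c : Fin (L + 2))) := by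
  have hcastval : ∀ c : ℕ, c < L + 2 → ((c : Fin (L + 2)) : ℕ) = c := fun c hc =>
    Fin.val_cast_of_lt hc
  have hkey : j - ((L + 1 : ℕ) : Fin (L + 2)) = j + 1 := by
    have h0 : ((L + 1 : ℕ) : Fin (L + 2)) + 1 = 0 := by
      have h1 : ((L + 1 : ℕ) : Fin (L + 2)) + 1 = ((L + 2 : ℕ) : Fin (L + 2)) := by
        push_cast
        ring
      rw [h1, Fin.natCast_self]
    rw [sub_eq_iff_eq_add]
    rw [add_assoc, add_comm 1, h0, add_zero]
  set D := (Finset.range (L + 2)).filter (fun c : ℕ => j - (c : Fin (L + 2)) ∉ W) with hDdef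
  have hDne : D.Nonempty := ⟨L + 1, by
    rw [hDdef, Finset.mem_filter, Finset.mem_range]
    exact ⟨by omega, by rw [hkey]; exact hj1⟩⟩
  set d := D.min' hDne with hddef
  have hdD : d ∈ D := Finset.min'_mem _ _
  have hdrange : d < L + 2 := Finset.mem_range.1 (Finset.mem_filter.1 hdD).1
  have hdW : j - (d : Fin (L + 2)) ∉ W := (Finset.mem_filter.1 hdD).2
  have hdle : d ≤ L + 1 := Finset.min'_le _ _ (by
    rw [hDdef, Finset.mem_filter, Finset.mem_range]
    exact ⟨by omega, by rw [hkey]; exact hj1⟩)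
  have hmin : ∀ c : ℕ, c < d → j - (c : Fin (L + 2)) ∈ W := by
    intro c hc
    by_contra hcW
    have : c ∈ D := by
      rw [hDdef, Finset.mem_filter, Finset.mem_range]
      exact ⟨by omega, hcW⟩
    have := Finset.min'_le _ _ this
    omega
  have hd0 : 0 < d := by
    rcases Nat.eq_zero_or_pos d with h | h
    · exfalso
      apply hdW
      rw [h]
      simpa using hj
    · exact h
  -- the chain argument
  have hchain : ∀ w ∈ W, ∀ i : ℕ, i ≤ ((j - w) : Fin (L + 2)).val →
      j - ((((j - w) : Fin (L + 2)).val - i : ℕ) : Fin (L + 2)) ∈ W := by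
    intro w hw i
    induction i with
    | zero =>
      intro _
      have : ((((j - w) : Fin (L + 2)).val : ℕ) : Fin (L + 2)) = j - w :=
        Fin.cast_val_eq_self _
      rw [Nat.sub_zero, this, sub_sub_cancel]
      exact hw
    | succ i ih =>
      intro hi
      have hprev := ih (by omega)
      set c₀ := ((j - w) : Fin (L + 2)).val with hc₀
      have hc₀lt : c₀ < L + 2 := (j - w).isLt
      have hne : j - ((c₀ - i : ℕ) : Fin (L + 2)) ≠ j := by
        intro hc
        have h0 : ((c₀ - i : ℕ) : Fin (L + 2)) = 0 := sub_eq_self.1 hc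
        have h1 := congrArg Fin.val h0
        rw [hcastval _ (by omega)] at h1
        simp at h1
        omega
      have hnext := hcl _ hprev hne
      have hceq : ((c₀ - i : ℕ) : Fin (L + 2)) = ((c₀ - (i + 1) : ℕ) : Fin (L + 2)) + 1 := by
        have : (c₀ - i : ℕ) = (c₀ - (i + 1)) + 1 := by omega
        rw [this]
        push_cast
        ring
      rw [hceq] at hnext
      have : j - (((c₀ - (i + 1) : ℕ) : Fin (L + 2)) + 1) + 1
          = j - ((c₀ - (i + 1) : ℕ) : Fin (L + 2)) := by ring
      rw [this] at hnext
      exact hnext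
  have hWsub : W ⊆ (Finset.range d).image (fun c : ℕ => j - (c : Fin (L + 2))) := by
    intro w hw
    set c₀ := ((j - w) : Fin (L + 2)).val with hc₀
    have hc₀lt : c₀ < L + 2 := (j - w).isLt
    have hwc : w = j - ((c₀ : ℕ) : Fin (L + 2)) := by
      rw [hc₀, Fin.cast_val_eq_self, sub_sub_cancel]
    have hall : ∀ c : ℕ, c ≤ c₀ → j - ((c : ℕ) : Fin (L + 2)) ∈ W := by
      intro c hc
      have := hchain w hw (c₀ - c) (by omega)
      have heq : (c₀ - (c₀ - c) : ℕ) = c := by omega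
      rwa [← hc₀, heq] at this
    have hc₀d : c₀ < d := by
      by_contra hcon
      push_neg at hcon
      exact hdW (hall d hcon)
    rw [Finset.mem_image]
    exact ⟨c₀, Finset.mem_range.2 hc₀d, hwc.symm⟩
  have hsubW : (Finset.range d).image (fun c : ℕ => j - (c : Fin (L + 2))) ⊆ W := by
    intro w hw
    rw [Finset.mem_image] at hw
    obtain ⟨c, hc, rfl⟩ := hw
    exact hmin c (Finset.mem_range.1 hc)
  have hWeq : W = (Finset.range d).image (fun c : ℕ => j - (c : Fin (L + 2))) :=
    Finset.Subset.antisymm hWsub hsubW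
  have hinj : Set.InjOn (fun c : ℕ => j - (c : Fin (L + 2))) (Finset.range d) := by
    intro a ha b hb hab
    simp only [Finset.coe_range, Set.mem_Iio] at ha hb
    have : ((a : ℕ) : Fin (L + 2)) = ((b : ℕ) : Fin (L + 2)) := by
      exact sub_right_inj.1 hab
    have := congrArg Fin.val this
    rwa [hcastval a (by omega), hcastval b (by omega)] at this
  have hcard : W.card = d := by
    rw [hWeq, Finset.card_image_of_injOn hinj, Finset.card_range]
  constructor
  · omega
  · rw [hcard]
    exact hWeq



/-- `N_3(π)` (for the radius `r`): permutations `σ` with `|support σ| = r` agreeing with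
`π` on exactly `r - 1` points of their support. -/
def N3 {n : ℕ} (r : ℕ) (π : Equiv.Perm (Fin n)) : Finset (Equiv.Perm (Fin n)) :=
  Finset.univ.filter fun σ =>
    σ.support.card = r ∧ (σ.support.filter fun i => σ i = π i).card = r - 1

variable {n r : ℕ} (π : Equiv.Perm (Fin n))

/-- The pair set `P`. -/
def pairSet {n : ℕ} (r : ℕ) (π : Equiv.Perm (Fin n)) : Finset (Fin n × Finset (Fin n)) :=
  (Finset.univ ×ˢ π.support.powersetCard r).filter fun p =>
    p.1 ∈ p.2 ∧ π⁻¹ p.1 ∈ p.2 ∧ π p.1 ∉ p.2 ∧ ∀ u ∈ p.2, u ≠ p.1 → π u ∈ p.2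

lemma mem_pairSet_iff {p : Fin n × Finset (Fin n)} :
    p ∈ pairSet r π ↔ p.2 ⊆ π.support ∧ p.2.card = r ∧
      p.1 ∈ p.2 ∧ π⁻¹ p.1 ∈ p.2 ∧ π p.1 ∉ p.2 ∧ ∀ u ∈ p.2, u ≠ p.1 → π u ∈ p.2 := by
  simp [pairSet, Finset.mem_filter, Finset.mem_powersetCard, and_assoc]

lemma N3_card_eq_pairSet (hr : 1 ≤ r) : (N3 r π).card = (pairSet r π).card := by
  have hmem : ∀ σ : Equiv.Perm (Fin n), σ ∈ N3 r π ↔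
      σ.support.card = r ∧ (σ.support.filter fun u => σ u = π u).card = r - 1 := by
    intro σ; simp [N3]
  -- the disagreement set has exactly one element
  have hDcard : ∀ σ ∈ N3 r π,
      (σ.support \ σ.support.filter fun u => σ u = π u).card = 1 := by
    intro σ hσ
    rw [hmem] at hσ
    rw [Finset.card_sdiff_of_subset (Finset.filter_subset _ _), hσ.1, hσ.2]
    omega
  have hDne : ∀ σ ∈ N3 r π,
      (σ.support \ σ.support.filter fun u => σ u = π u).Nonempty := by
    intro σ hσ
    rw [← Finset.card_pos, hDcard σ hσ]
    norm_num
  apply Finset.card_bij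
    (fun σ hσ => (((σ.support \ σ.support.filter fun u => σ u = π u)).min' (hDne σ hσ),
      σ.support))
  · -- maps into pairSet
    intro σ hσ
    set x := ((σ.support \ σ.support.filter fun u => σ u = π u)).min' (hDne σ hσ) with hxdef
    have hxD : x ∈ σ.support \ σ.support.filter fun u => σ u = π u :=
      Finset.min'_mem _ _
    have hDsing : (σ.support \ σ.support.filter fun u => σ u = π u) = {x} :=
      Finset.eq_singleton_iff_unique_mem.2 ⟨hxD, fun y hy => by
        have := hDcard σ hσ
        rw [Finset.card_eq_one] at this
        obtain ⟨z, hz⟩ := this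
        rw [hz] at hxD hy
        simp at hxD hy
        rw [hy, hxD]⟩
    have hxsupp : x ∈ σ.support := (Finset.mem_sdiff.1 hxD).1
    have hxne : σ x ≠ π x := by
      have := (Finset.mem_sdiff.1 hxD).2
      simp only [Finset.mem_filter, not_and] at this
      exact this hxsupp
    have hA : σ.support.filter (fun u => σ u = π u) = σ.support.erase x := by
      ext u
      simp only [Finset.mem_filter, Finset.mem_erase]
      constructor
      · intro ⟨hu, hagree⟩
        refine ⟨fun h => hxne (h ▸ hagree), hu⟩
      · intro ⟨hne, hu⟩
        refine ⟨hu, ?_⟩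
        by_contra hc
        have : u ∈ σ.support \ σ.support.filter fun u => σ u = π u := by
          simp only [Finset.mem_sdiff, Finset.mem_filter, not_and]
          exact ⟨hu, fun _ => hc⟩
        rw [hDsing] at this
        exact hne (Finset.mem_singleton.1 this)
    have hagree : ∀ u ∈ σ.support, u ≠ x → σ u = π u := by
      intro u hu hne
      have : u ∈ σ.support.filter fun u => σ u = π u := by
        rw [hA]; exact Finset.mem_erase.2 ⟨hne, hu⟩
      exact (Finset.mem_filter.1 this).2
    rw [hmem] at hσ
    -- image of the agreement set
    have himg : Finset.image σ (σ.support.erase x) = Finset.image π (σ.support.erase x) := by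
      apply Finset.image_congr
      intro u hu
      rw [Finset.mem_coe, Finset.mem_erase] at hu
      exact hagree u hu.2 hu.1
    have hsuppmap : ∀ u ∈ σ.support, σ u ∈ σ.support := fun u hu =>
      Equiv.Perm.apply_mem_support.2 hu
    have himgsub : Finset.image σ (σ.support.erase x) ⊆ σ.support := by
      intro v hv
      rw [Finset.mem_image] at hv
      obtain ⟨u, hu, rfl⟩ := hv
      exact hsuppmap u (Finset.mem_of_mem_erase hu)
    have himgcard : (Finset.image σ (σ.support.erase x)).card = r - 1 := by
      rw [Finset.card_image_of_injective _ σ.injective, Finset.card_erase_of_mem hxsupp, hσ.1]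
    -- x is in the image of the agreement set under σ (i.e. under π)
    have hxin : x ∈ Finset.image σ (σ.support.erase x) := by
      by_contra hc
      have hsub : Finset.image σ (σ.support.erase x) ⊆ σ.support.erase x := by
        intro v hv
        exact Finset.mem_erase.2 ⟨fun h => hc (h ▸ hv), himgsub hv⟩
      have : Finset.image σ (σ.support.erase x) = σ.support.erase x :=
        Finset.eq_of_subset_of_card_le hsub (by
          rw [himgcard, Finset.card_erase_of_mem hxsupp, hσ.1])
      -- then σ x = x, contradiction
      have hσx : σ x ∈ σ.support := hsuppmap x hxsupp
      have hσxx : σ x ≠ x := Equiv.Perm.mem_support.1 hxsupp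
      have hmemerase : σ x ∈ Finset.image σ (σ.support.erase x) := by
        rw [this]; exact Finset.mem_erase.2 ⟨hσxx, hσx⟩
      rw [Finset.mem_image] at hmemerase
      obtain ⟨u, hu, hux⟩ := hmemerase
      have : u = x := σ.injective hux
      exact (Finset.mem_erase.1 hu).1 (this ▸ rfl)
    -- hence π⁻¹ x ∈ support and x ∈ π.support etc.
    rw [himg, Finset.mem_image] at hxin
    obtain ⟨u₀, hu₀A, hu₀⟩ := hxin
    have hu₀supp : u₀ ∈ σ.support := Finset.mem_of_mem_erase hu₀A
    have hπinv : π⁻¹ x = u₀ := by rw [← hu₀]; simp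
    have hxπsupp : x ∈ π.support := by
      rw [Equiv.Perm.mem_support]
      intro hfix
      have : π u₀ = π x := by rw [hu₀, hfix]
      have := π.injective this
      exact (Finset.mem_erase.1 hu₀A).1 (this ▸ rfl)
    have hVsub : σ.support ⊆ π.support := by
      intro u hu
      by_cases hux : u = x
      · exact hux ▸ hxπsupp
      · rw [Equiv.Perm.mem_support]
        rw [← hagree u hu hux]
        exact Equiv.Perm.mem_support.1 hu
    have hπxV : π x ∉ σ.support := by
      intro hπx
      -- then π x would be the missing element, equal to σ x
      have h1 : σ x ∈ σ.support \ Finset.image σ (σ.support.erase x) := by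
        refine Finset.mem_sdiff.2 ⟨hsuppmap x hxsupp, ?_⟩
        rw [Finset.mem_image]
        rintro ⟨u, hu, hux⟩
        exact (Finset.mem_erase.1 hu).1 (σ.injective hux ▸ rfl)
      have h2 : π x ∈ σ.support \ Finset.image σ (σ.support.erase x) := by
        refine Finset.mem_sdiff.2 ⟨hπx, ?_⟩
        rw [himg, Finset.mem_image]
        rintro ⟨u, hu, huxx⟩
        exact (Finset.mem_erase.1 hu).1 (π.injective huxx ▸ rfl)
      have hcard1 : (σ.support \ Finset.image σ (σ.support.erase x)).card = 1 := by
        rw [Finset.card_sdiff_of_subset himgsub, himgcard, hσ.1]; omega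
      rw [Finset.card_eq_one] at hcard1
      obtain ⟨z, hz⟩ := hcard1
      rw [hz, Finset.mem_singleton] at h1 h2
      exact hxne (h1.trans h2.symm)
    rw [mem_pairSet_iff]
    refine ⟨hVsub, hσ.1, hxsupp, hπinv ▸ hu₀supp, hπxV, ?_⟩
    intro u hu hux
    rw [← hagree u hu hux]
    exact hsuppmap u hu
  · -- injectivity
    intro σ₁ hσ₁ σ₂ hσ₂ heq
    have key : ∀ σ, σ ∈ N3 r π → ∀ x : Fin n,
        x ∈ σ.support \ σ.support.filter (fun u => σ u = π u) →
        σ x ≠ π x ∧ (∀ u ∈ σ.support, u ≠ x → σ u = π u) := by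
      intro σ hσ x hxD
      have hDsing : (σ.support \ σ.support.filter fun u => σ u = π u) = {x} := by
        have := hDcard σ hσ
        rw [Finset.card_eq_one] at this
        obtain ⟨z, hz⟩ := this
        rw [hz] at hxD ⊢
        rw [Finset.mem_singleton] at hxD
        rw [hxD]
      have hxsupp : x ∈ σ.support := (Finset.mem_sdiff.1 hxD).1
      have hxne : σ x ≠ π x := by
        have := (Finset.mem_sdiff.1 hxD).2
        simp only [Finset.mem_filter, not_and] at this
        exact this hxsupp
      refine ⟨hxne, ?_⟩
      intro u hu hne
      by_contra hc
      have : u ∈ σ.support \ σ.support.filter fun v => σ v = π v := by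
        simp only [Finset.mem_sdiff, Finset.mem_filter, not_and]
        exact ⟨hu, fun _ => hc⟩
      rw [hDsing] at this
      exact hne (Finset.mem_singleton.1 this)
    rw [Prod.mk.injEq] at heq
    obtain ⟨hxeq, hVeq⟩ := heq
    set x := (σ₁.support \ σ₁.support.filter fun u => σ₁ u = π u).min' (hDne σ₁ hσ₁) with hx1
    have hxD1 : x ∈ σ₁.support \ σ₁.support.filter fun u => σ₁ u = π u := Finset.min'_mem _ _
    have hxD2 : x ∈ σ₂.support \ σ₂.support.filter fun u => σ₂ u = π u := by
      rw [hxeq]; exact Finset.min'_mem _ _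
    obtain ⟨hne1, hag1⟩ := key σ₁ hσ₁ x hxD1
    obtain ⟨hne2, hag2⟩ := key σ₂ hσ₂ x hxD2
    have hxsupp1 : x ∈ σ₁.support := (Finset.mem_sdiff.1 hxD1).1
    rw [hmem] at hσ₁ hσ₂
    -- σ₁ x = σ₂ x
    have hximg : ∀ σ : Equiv.Perm (Fin n), σ.support = σ₁.support →
        (σ x ≠ π x) → (∀ u ∈ σ.support, u ≠ x → σ u = π u) →
        σ x ∈ σ₁.support \ Finset.image π (σ₁.support.erase x) := by
      intro σ hs hne hag
      refine Finset.mem_sdiff.2 ⟨?_, ?_⟩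
      · rw [← hs]; exact Equiv.Perm.apply_mem_support.2 (hs ▸ hxsupp1)
      · rw [Finset.mem_image]
        rintro ⟨u, hu, huxx⟩
        have hu' : u ∈ σ.support := by rw [hs]; exact Finset.mem_of_mem_erase hu
        have hune : u ≠ x := (Finset.mem_erase.1 hu).1
        rw [← hag u hu' hune] at huxx
        exact hune (σ.injective huxx)
    have h1 := hximg σ₁ rfl hne1 hag1
    have h2 := hximg σ₂ hVeq.symm hne2 hag2
    have hcard1 : (σ₁.support \ Finset.image π (σ₁.support.erase x)).card = 1 := by
      have himgsub : Finset.image π (σ₁.support.erase x) ⊆ σ₁.support := by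
        intro v hv
        rw [Finset.mem_image] at hv
        obtain ⟨u, hu, rfl⟩ := hv
        have hu' : u ∈ σ₁.support := Finset.mem_of_mem_erase hu
        rw [← hag1 u hu' (Finset.mem_erase.1 hu).1]
        exact Equiv.Perm.apply_mem_support.2 hu'
      rw [Finset.card_sdiff_of_subset himgsub,
        Finset.card_image_of_injective _ π.injective,
        Finset.card_erase_of_mem hxsupp1, hσ₁.1]
      omega
    have hxx : σ₁ x = σ₂ x := by
      rw [Finset.card_eq_one] at hcard1
      obtain ⟨z, hz⟩ := hcard1
      rw [hz, Finset.mem_singleton] at h1 h2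
      rw [h1, h2]
    ext u
    by_cases hu : u ∈ σ₁.support
    · by_cases hux : u = x
      · rw [hux]; exact congrArg Fin.val hxx
      · rw [hag1 u hu hux, ← hag2 u (hVeq ▸ hu) hux]
    · have h1 : σ₁ u = u := Equiv.Perm.notMem_support.1 hu
      have h2 : σ₂ u = u := Equiv.Perm.notMem_support.1 (by rw [← hVeq]; exact hu)
      rw [h1, h2]
  · -- surjectivity
    intro p hp
    obtain ⟨x, V⟩ := p
    rw [mem_pairSet_iff] at hp
    obtain ⟨hVsub, hVcard, hxV, hπinvV, hπxV, hclose⟩ := hp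
    have hxπsupp : x ∈ π.support := hVsub hxV
    have hπxx : π x ≠ x := Equiv.Perm.mem_support.1 hxπsupp
    set A := V.erase x with hAdef
    have hVmem : ∀ u, u ∈ V ↔ u ∈ A ∨ u = x := by
      intro u
      constructor
      · intro hu
        by_cases hux : u = x
        · exact Or.inr hux
        · exact Or.inl (Finset.mem_erase.2 ⟨hux, hu⟩)
      · rintro (hu | rfl)
        · exact Finset.mem_of_mem_erase hu
        · exact hxV
    have hAV : A ⊆ V := Finset.erase_subset _ _
    have hπinvA : π⁻¹ x ∈ A := by
      refine Finset.mem_erase.2 ⟨?_, hπinvV⟩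
      intro hc
      apply hπxx
      rw [← hc, Equiv.Perm.coe_inv, Equiv.apply_symm_apply]
      exact hc.symm
    have hπA : ∀ u ∈ A, π u ∈ V := fun u hu =>
      hclose u (hAV hu) (Finset.mem_erase.1 hu).1
    set S := Finset.image π A with hSdef
    have hSV : S ⊆ V := by
      intro v hv
      rw [hSdef, Finset.mem_image] at hv
      obtain ⟨u, hu, rfl⟩ := hv
      exact hπA u hu
    have hxS : x ∈ S := by
      rw [hSdef, Finset.mem_image]
      exact ⟨π⁻¹ x, hπinvA, by simp⟩
    have hScard : S.card = r - 1 := by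
      rw [hSdef, Finset.card_image_of_injective _ π.injective,
        Finset.card_erase_of_mem hxV, hVcard]
    have hYcard : (V \ S).card = 1 := by
      rw [Finset.card_sdiff_of_subset hSV, hScard, hVcard]; omega
    rw [Finset.card_eq_one] at hYcard
    obtain ⟨y, hY⟩ := hYcard
    have hyV : y ∈ V := by
      have : y ∈ V \ S := by rw [hY]; exact Finset.mem_singleton_self _
      exact (Finset.mem_sdiff.1 this).1
    have hyS : y ∉ S := by
      have : y ∈ V \ S := by rw [hY]; exact Finset.mem_singleton_self _
      exact (Finset.mem_sdiff.1 this).2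
    have hyx : y ≠ x := fun h => hyS (h ▸ hxS)
    have hyπx : y ≠ π x := fun h => hπxV (h ▸ hyV)
    set g : Fin n → Fin n := fun u => if u ∈ A then π u else if u = x then y else u with hgdef
    have hgA : ∀ u ∈ A, g u = π u := by intro u hu; simp only [hgdef, if_pos hu]
    have hgx : g x = y := by
      have : x ∉ A := fun h => (Finset.mem_erase.1 h).1 rfl
      simp only [hgdef, if_neg this, if_pos rfl]
      simp
    have hgout : ∀ u, u ∉ V → g u = u := by
      intro u hu
      have h1 : u ∉ A := fun h => hu (hAV h)
      have h2 : u ≠ x := fun h => hu (h ▸ hxV)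
      simp only [hgdef, if_neg h1, if_neg h2]
    have hginj : Function.Injective g := by
      intro u v h
      by_cases hu : u ∈ A <;> by_cases hv : v ∈ A
      · rw [hgA u hu, hgA v hv] at h
        exact π.injective h
      · rw [hgA u hu] at h
        by_cases hvx : v = x
        · rw [hvx, hgx] at h
          exact absurd (h ▸ Finset.mem_image_of_mem π hu : y ∈ S) hyS
        · simp only [hgdef, if_neg hv, if_neg hvx] at h
          exfalso
          have : v ∈ V := h ▸ hπA u hu
          rcases (hVmem v).1 this with h' | h'
          · exact hv h'
          · exact hvx h'
      · rw [hgA v hv] at h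
        by_cases hux : u = x
        · rw [hux, hgx] at h
          exact absurd (h.symm ▸ Finset.mem_image_of_mem π hv : y ∈ S) hyS
        · simp only [hgdef, if_neg hu, if_neg hux] at h
          exfalso
          have : u ∈ V := h ▸ hπA v hv
          rcases (hVmem u).1 this with h' | h'
          · exact hu h'
          · exact hux h'
      · by_cases hux : u = x <;> by_cases hvx : v = x
        · rw [hux, hvx]
        · simp only [hgdef, if_neg hu, if_neg hv, if_pos hux, if_neg hvx] at h
          exfalso
          have : v ∈ V := h ▸ hyV
          rcases (hVmem v).1 this with h' | h'
          · exact hv h'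
          · exact hvx h'
        · simp only [hgdef, if_neg hu, if_neg hv, if_neg hux, if_pos hvx] at h
          exfalso
          have : u ∈ V := h.symm ▸ hyV
          rcases (hVmem u).1 this with h' | h'
          · exact hu h'
          · exact hux h'
        · simp only [hgdef, if_neg hu, if_neg hv, if_neg hux, if_neg hvx] at h
          exact h
    set σ : Equiv.Perm (Fin n) := Equiv.ofBijective g
      (Finite.injective_iff_bijective.1 hginj) with hσdef
    have hσapp : ∀ u, σ u = g u := fun u => rfl
    have hsupp : σ.support = V := by
      ext u
      rw [Equiv.Perm.mem_support, hσapp]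
      constructor
      · intro h
        by_contra hc
        exact h (hgout u hc)
      · intro hu
        rcases (hVmem u).1 hu with h' | rfl
        · rw [hgA u h']
          exact Equiv.Perm.mem_support.1 (hVsub (hAV h'))
        · rw [hgx]
          exact hyx
    have hfilter : σ.support.filter (fun u => σ u = π u) = A := by
      ext u
      rw [Finset.mem_filter, hsupp]
      constructor
      · rintro ⟨hu, hagree⟩
        rcases (hVmem u).1 hu with h' | rfl
        · exact h'
        · rw [hσapp, hgx] at hagree
          exact absurd hagree hyπx
      · intro hu
        exact ⟨hAV hu, by rw [hσapp, hgA u hu]⟩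
    have hσN3 : σ ∈ N3 r π := by
      rw [hmem]
      constructor
      · rw [hsupp, hVcard]
      · rw [hfilter, hAdef, Finset.card_erase_of_mem hxV, hVcard]
    refine ⟨σ, hσN3, ?_⟩
    have hD : σ.support \ σ.support.filter (fun u => σ u = π u) = {x} := by
      rw [hfilter, hsupp]
      ext u
      rw [Finset.mem_sdiff, Finset.mem_singleton]
      constructor
      · rintro ⟨hu, hnu⟩
        rcases (hVmem u).1 hu with h' | rfl
        · exact absurd h' hnu
        · rfl
      · rintro rfl
        exact ⟨hxV, fun h => (Finset.mem_erase.1 h).1 rfl⟩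
    rw [Prod.mk.injEq]
    constructor
    · have : ∀ (hne : (σ.support \ σ.support.filter fun u => σ u = π u).Nonempty),
          (σ.support \ σ.support.filter fun u => σ u = π u).min' hne = x := by
        intro hne
        simp_rw [hD]
        exact Finset.min'_singleton x
      exact this _
    · exact hsupp

section MainCount

variable {n q L r : ℕ} {p₁ p₂ : Fin n → Prop} [DecidablePred p₁] [DecidablePred p₂]
  (π : Equiv.Perm (Fin n)) (f₁ : Fin q × Fin 2 ≃ {i : Fin n // p₁ i})
  (f₂ : Fin (L + 2) ≃ {i : Fin n // p₂ i})

lemma main_count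
    (hπ1 : ∀ (j : Fin q) (i : Fin 2), π (f₁ (j, i)) = ↑(f₁ (j, i + 1)))
    (hπ2 : ∀ j : Fin (L + 2), π (f₂ j) = ↑(f₂ (j + 1)))
    (hπfix : ∀ x : Fin n, ¬ p₁ x → ¬ p₂ x → π x = x)
    (hdisj : ∀ x : Fin n, ¬ (p₁ x ∧ p₂ x))
    (hr1 : 1 ≤ r) :
    (N3 r π).card =
      (L + 2) * ∑ k ∈ Finset.range (q + 1),
        (if 2 ≤ r - 2 * k ∧ r - 2 * k ≤ L + 1 then Nat.choose q k else 0) := by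
  classical
  -- basic helpers
  have hco1 : ∀ z w : Fin q × Fin 2, (↑(f₁ z) : Fin n) = ↑(f₁ w) → z = w := fun z w h =>
    f₁.injective (Subtype.coe_injective h)
  have hco2 : ∀ z w : Fin (L + 2), (↑(f₂ z) : Fin n) = ↑(f₂ w) → z = w := fun z w h =>
    f₂.injective (Subtype.coe_injective h)
  have hp1 : ∀ z, p₁ ↑(f₁ z) := fun z => (f₁ z).2
  have hp2 : ∀ c, p₂ ↑(f₂ c) := fun c => (f₂ c).2
  have hone : (1 : Fin (L + 2)) ≠ 0 := fun h => absurd (congrArg Fin.val h) (by simp)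
  have hfin2 : ∀ i : Fin 2, i + 1 ≠ i := by decide
  have hfin2' : ∀ i : Fin 2, i + 1 + 1 = i := by decide
  have hcastval : ∀ c : ℕ, c < L + 2 → ((c : Fin (L + 2)) : ℕ) = c := fun c hc =>
    Fin.val_cast_of_lt hc
  have hπinv2 : ∀ c : Fin (L + 2), π⁻¹ ↑(f₂ c) = ↑(f₂ (c - 1)) := by
    intro c
    apply π.injective
    rw [Equiv.Perm.coe_inv, Equiv.apply_symm_apply, hπ2, sub_add_cancel]
  have hπinv1 : ∀ z : Fin q × Fin 2, π⁻¹ ↑(f₁ z) = ↑(f₁ (z.1, z.2 + 1)) := by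
    intro z
    apply π.injective
    rw [Equiv.Perm.coe_inv, Equiv.apply_symm_apply, hπ1, hfin2']
  have hsupport : ∀ u : Fin n, u ∈ π.support ↔ (p₁ u ∨ p₂ u) := by
    intro u
    rw [Equiv.Perm.mem_support]
    constructor
    · intro h
      by_contra hc
      push_neg at hc
      exact h (hπfix u hc.1 hc.2)
    · rintro (h | h)
      · have hu : u = ↑(f₁ (f₁.symm ⟨u, h⟩)) := by simp
        rw [hu, hπ1 (f₁.symm ⟨u, h⟩).1 (f₁.symm ⟨u, h⟩).2]
        intro hc
        exact hfin2 _ (congrArg Prod.snd (hco1 _ _ hc))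
      · have hu : u = ↑(f₂ (f₂.symm ⟨u, h⟩)) := by simp
        rw [hu, hπ2]
        intro hc
        have := hco2 _ _ hc
        exact hone (by rwa [add_eq_left] at this)
  -- the indexing set
  set Ksets := (Finset.univ : Finset (Finset (Fin q))).filter
    (fun K => 2 ≤ r - 2 * K.card ∧ r - 2 * K.card ≤ L + 1) with hKsets
  set V₁ : Finset (Fin q) → Finset (Fin n) :=
    fun K => (K ×ˢ (Finset.univ : Finset (Fin 2))).image (fun z => (↑(f₁ z) : Fin n))
    with hV₁def
  set arc : Fin (L + 2) → ℕ → Finset (Fin n) :=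
    fun j m => (Finset.range m).image (fun c : ℕ => (↑(f₂ (j - (c : Fin (L + 2)))) : Fin n))
    with harcdef
  have hV₁mem : ∀ (K : Finset (Fin q)) (u : Fin n),
      u ∈ V₁ K ↔ ∃ z : Fin q × Fin 2, z.1 ∈ K ∧ u = ↑(f₁ z) := by
    intro K u
    rw [hV₁def]
    simp only [Finset.mem_image, Finset.mem_product, Finset.mem_univ, and_true]
    constructor
    · rintro ⟨z, hz, rfl⟩; exact ⟨z, hz, rfl⟩
    · rintro ⟨z, hz, rfl⟩; exact ⟨z, hz, rfl⟩
  have harcmem : ∀ (j : Fin (L + 2)) (m : ℕ) (u : Fin n),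
      u ∈ arc j m ↔ ∃ c : ℕ, c < m ∧ u = ↑(f₂ (j - (c : Fin (L + 2)))) := by
    intro j m u
    rw [harcdef]
    simp only [Finset.mem_image, Finset.mem_range]
    constructor
    · rintro ⟨c, hc, rfl⟩; exact ⟨c, hc, rfl⟩
    · rintro ⟨c, hc, rfl⟩; exact ⟨c, hc, rfl⟩
  have hV₁p : ∀ K u, u ∈ V₁ K → p₁ u := by
    intro K u hu
    obtain ⟨z, _, rfl⟩ := (hV₁mem K u).1 hu
    exact hp1 z
  have harcp : ∀ j m u, u ∈ arc j m → p₂ u := by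
    intro j m u hu
    obtain ⟨c, _, rfl⟩ := (harcmem j m u).1 hu
    exact hp2 _
  have hV₁card : ∀ K : Finset (Fin q), (V₁ K).card = 2 * K.card := by
    intro K
    rw [hV₁def]
    rw [Finset.card_image_of_injective _ (fun z w h => hco1 z w h),
      Finset.card_product, Finset.card_univ, Fintype.card_fin]
    ring
  have harccard : ∀ (j : Fin (L + 2)) (m : ℕ), m ≤ L + 2 → (arc j m).card = m := by
    intro j m hm
    rw [harcdef]
    rw [Finset.card_image_of_injOn, Finset.card_range]
    intro a ha b hb hab
    simp only [Finset.coe_range, Set.mem_Iio] at ha hb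
    have h1 := hco2 _ _ hab
    have h2 : ((a : ℕ) : Fin (L + 2)) = ((b : ℕ) : Fin (L + 2)) := sub_right_inj.1 h1
    have := congrArg Fin.val h2
    rwa [hcastval a (by omega), hcastval b (by omega)] at this
  have hdisjV : ∀ (K : Finset (Fin q)) (j : Fin (L + 2)) (m : ℕ),
      Disjoint (V₁ K) (arc j m) := by
    intro K j m
    rw [Finset.disjoint_left]
    intro u hu1 hu2
    exact hdisj u ⟨hV₁p K u hu1, harcp j m u hu2⟩
  have hcard_eq : (pairSet r π).card = ((Finset.univ : Finset (Fin (L + 2))) ×ˢ Ksets).card := by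
    rw [eq_comm]
    apply Finset.card_bij (fun z _ =>
      ((↑(f₂ z.1) : Fin n), V₁ z.2 ∪ arc z.1 (r - 2 * z.2.card)))
    · -- well-defined
      rintro ⟨j, K⟩ hz
      rw [Finset.mem_product, hKsets, Finset.mem_filter] at hz
      obtain ⟨-, -, hg1, hg2⟩ := hz
      set m := r - 2 * K.card with hmdef
      have hm2 : m ≤ L + 2 := by omega
      rw [mem_pairSet_iff]
      refine ⟨?_, ?_, ?_, ?_, ?_, ?_⟩
      · -- subset of support
        intro u hu
        rw [hsupport]
        rcases Finset.mem_union.1 hu with h | h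
        · exact Or.inl (hV₁p _ _ h)
        · exact Or.inr (harcp _ _ _ h)
      · -- cardinality
        show (V₁ K ∪ arc j m).card = r
        rw [Finset.card_union_of_disjoint (hdisjV K j m), hV₁card, harccard j m hm2]
        omega
      · -- x ∈ V
        show (↑(f₂ j) : Fin n) ∈ V₁ K ∪ arc j m
        refine Finset.mem_union_right _ ((harcmem j m _).2 ⟨0, by omega, ?_⟩)
        rw [Nat.cast_zero, sub_zero]
      · -- π⁻¹ x ∈ V
        show π⁻¹ (↑(f₂ j) : Fin n) ∈ V₁ K ∪ arc j m
        rw [hπinv2]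
        refine Finset.mem_union_right _ ((harcmem j m _).2 ⟨1, by omega, ?_⟩)
        rw [Nat.cast_one]
      · -- π x ∉ V
        show π (↑(f₂ j) : Fin n) ∉ V₁ K ∪ arc j m
        rw [hπ2]
        intro hc
        rcases Finset.mem_union.1 hc with h | h
        · exact hdisj _ ⟨hV₁p _ _ h, hp2 _⟩
        · obtain ⟨c, hcm, hceq⟩ := (harcmem j m _).1 h
          have h1 : j + 1 = j - (c : Fin (L + 2)) := hco2 _ _ hceq
          have h2 : (c : Fin (L + 2)) + 1 = 0 := by linear_combination h1
          have h5 : (((c + 1 : ℕ)) : Fin (L + 2)) = 0 := by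
            push_cast
            exact h2
          have h6 := congrArg Fin.val h5
          rw [hcastval (c + 1) (by omega)] at h6
          simp at h6
      · -- closure
        intro u hu hune
        rcases Finset.mem_union.1 hu with h | h
        · obtain ⟨⟨a, i⟩, ha, rfl⟩ := (hV₁mem K u).1 h
          rw [hπ1]
          exact Finset.mem_union_left _ ((hV₁mem K _).2 ⟨(a, i + 1), ha, rfl⟩)
        · obtain ⟨c, hcm, rfl⟩ := (harcmem j m _).1 h
          have hc0 : c ≠ 0 := by
            rintro rfl
            apply hune
            rw [Nat.cast_zero, sub_zero]
          rw [hπ2]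
          refine Finset.mem_union_right _ ((harcmem j m _).2 ⟨c - 1, by omega, ?_⟩)
          congr 1
          have hcc : ((c : ℕ) : Fin (L + 2)) = (((c - 1 : ℕ)) : Fin (L + 2)) + 1 := by
            have : (c : ℕ) = (c - 1) + 1 := by omega
            rw [this]
            push_cast
            ring
          rw [hcc]
          ring
    · -- injective
      rintro ⟨j, K⟩ hz ⟨j', K'⟩ hz' heq
      rw [Prod.mk.injEq] at heq
      obtain ⟨h1, h2⟩ := heq
      have hj : j = j' := hco2 _ _ h1
      subst hj
      have hK : K = K' := by
        ext a
        have hmem : ∀ Kx : Finset (Fin q),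
            (↑(f₁ (a, 0)) : Fin n) ∈ V₁ Kx ∪ arc j (r - 2 * Kx.card) ↔ a ∈ Kx := by
          intro Kx
          constructor
          · intro h
            rcases Finset.mem_union.1 h with h | h
            · obtain ⟨z, hz1, hzeq⟩ := (hV₁mem Kx _).1 h
              have := hco1 _ _ hzeq.symm
              rw [this] at hz1
              exact hz1
            · exact absurd ⟨hp1 _, harcp _ _ _ h⟩ (hdisj _)
          · intro h
            exact Finset.mem_union_left _ ((hV₁mem _ _).2 ⟨(a, 0), h, rfl⟩)
        rw [← hmem K, ← hmem K', h2]
      rw [hK]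
    · -- surjective
      rintro ⟨x, V⟩ hp
      rw [mem_pairSet_iff] at hp
      obtain ⟨hVsub, hVcard, hxV, hπinvV, hπxV, hclose⟩ := hp
      simp only at hVsub hVcard hxV hπinvV hπxV hclose
      have hx2 : p₂ x := by
        rcases (hsupport x).1 (hVsub hxV) with h | h
        · exfalso
          set z := f₁.symm ⟨x, h⟩ with hzdef
          have hxz : x = ↑(f₁ z) := by simp [hzdef]
          have hxz' : x = ↑(f₁ (z.1, z.2)) := by rw [Prod.mk.eta]; exact hxz
          have hπx : π x = ↑(f₁ (z.1, z.2 + 1)) := by rw [hxz', hπ1 z.1 z.2]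
          have hπinvx : π⁻¹ x = ↑(f₁ (z.1, z.2 + 1)) := by
            rw [hxz, hπinv1]
          apply hπxV
          rw [hπx, ← hπinvx]
          exact hπinvV
        · exact h
      set j := f₂.symm ⟨x, hx2⟩ with hjdef
      have hxj : x = ↑(f₂ j) := by simp [hjdef]
      set W := Finset.univ.filter (fun c : Fin (L + 2) => (↑(f₂ c) : Fin n) ∈ V) with hWdef
      have hWmem : ∀ c, c ∈ W ↔ (↑(f₂ c) : Fin n) ∈ V := by
        intro c; simp [hWdef]
      have hjW : j ∈ W := (hWmem j).2 (hxj ▸ hxV)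
      have hj1W : j + 1 ∉ W := fun h => hπxV (by rw [hxj, hπ2]; exact (hWmem _).1 h)
      have hWcl : ∀ c ∈ W, c ≠ j → c + 1 ∈ W := by
        intro c hc hcj
        apply (hWmem _).2
        have hne : (↑(f₂ c) : Fin n) ≠ x := by
          rw [hxj]; intro hh; exact hcj (hco2 _ _ hh)
        have := hclose _ ((hWmem c).1 hc) hne
        rwa [hπ2] at this
      obtain ⟨hWle, hWeq⟩ := arc_structure hjW hj1W hWcl
      set K := Finset.univ.filter (fun a : Fin q => (↑(f₁ (a, 0)) : Fin n) ∈ V) with hKdef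
      have hKmem : ∀ a, a ∈ K ↔ (↑(f₁ (a, 0)) : Fin n) ∈ V := by
        intro a; simp [hKdef]
      have hx1ne : ∀ z : Fin q × Fin 2, (↑(f₁ z) : Fin n) ≠ x := by
        intro z h
        exact hdisj _ ⟨hp1 z, h ▸ hx2⟩
      have hpairV : ∀ (a : Fin q) (i : Fin 2), (↑(f₁ (a, i)) : Fin n) ∈ V →
          (↑(f₁ (a, i + 1)) : Fin n) ∈ V := by
        intro a i h
        have := hclose _ h (hx1ne _)
        rwa [hπ1] at this
      have hKiff : ∀ (a : Fin q) (i : Fin 2), ((↑(f₁ (a, i)) : Fin n) ∈ V ↔ a ∈ K) := by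
        intro a i
        constructor
        · intro h
          apply (hKmem a).2
          fin_cases i
          · exact h
          · have := hpairV a 1 h
            have h2 : (1 : Fin 2) + 1 = 0 := by decide
            rwa [h2] at this
        · intro h
          fin_cases i
          · exact (hKmem a).1 h
          · have := hpairV a 0 ((hKmem a).1 h)
            have h0 : (0 : Fin 2) + 1 = 1 := by decide
            rwa [h0] at this
      have hVeq : V = V₁ K ∪ arc j W.card := by
        ext u
        constructor
        · intro hu
          rcases (hsupport u).1 (hVsub hu) with h | h
          · set z := f₁.symm ⟨u, h⟩ with hzdef
            have huz : u = ↑(f₁ z) := by simp [hzdef]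
            have huz' : u = ↑(f₁ (z.1, z.2)) := by rw [Prod.mk.eta]; exact huz
            apply Finset.mem_union_left
            apply (hV₁mem K u).2
            refine ⟨(z.1, z.2), ?_, huz'⟩
            exact (hKiff z.1 z.2).1 (huz' ▸ hu)
          · set c := f₂.symm ⟨u, h⟩ with hcdef
            have huc : u = ↑(f₂ c) := by simp [hcdef]
            have hcW : c ∈ W := (hWmem c).2 (huc ▸ hu)
            rw [hWeq, Finset.mem_image] at hcW
            obtain ⟨c', hc', hceq⟩ := hcW
            apply Finset.mem_union_right
            apply (harcmem j W.card u).2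
            exact ⟨c', Finset.mem_range.1 hc', by rw [huc, hceq]⟩
        · intro hu
          rcases Finset.mem_union.1 hu with h | h
          · obtain ⟨z, hz1, rfl⟩ := (hV₁mem K _).1 h
            have := (hKiff z.1 z.2).2 hz1
            rwa [Prod.mk.eta] at this
          · obtain ⟨c, hc, rfl⟩ := (harcmem j W.card _).1 h
            have : j - (c : Fin (L + 2)) ∈ W := by
              rw [hWeq, Finset.mem_image]
              exact ⟨c, Finset.mem_range.2 hc, rfl⟩
            exact (hWmem _).1 this
      have hcardsplit : r = 2 * K.card + W.card := by
        rw [← hVcard, hVeq, Finset.card_union_of_disjoint (hdisjV _ _ _), hV₁card,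
          harccard _ _ (by omega)]
      have hW2 : 2 ≤ W.card := by
        have hj1' : j - 1 ∈ W := by
          apply (hWmem _).2
          have := hπinvV
          rwa [hxj, hπinv2] at this
        have hne : j ≠ j - 1 := by
          intro h
          exact hone (by linear_combination h)
        exact Finset.one_lt_card.2 ⟨j, hjW, j - 1, hj1', hne⟩
      refine ⟨(j, K), ?_, ?_⟩
      · rw [Finset.mem_product, hKsets, Finset.mem_filter]
        refine ⟨Finset.mem_univ _, Finset.mem_univ _, ?_, ?_⟩
        · show 2 ≤ r - 2 * K.card
          omega
        · show r - 2 * K.card ≤ L + 1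
          omega
      · rw [Prod.mk.injEq]
        refine ⟨hxj.symm, ?_⟩
        have hm : r - 2 * K.card = W.card := by omega
        rw [hm, ← hVeq]
  rw [N3_card_eq_pairSet π hr1, hcard_eq, Finset.card_product, Finset.card_univ,
    Fintype.card_fin]
  congr 1
  rw [hKsets]
  rw [Finset.card_eq_sum_card_fiberwise
    (f := Finset.card) (t := Finset.range (q + 1)) (fun K hK => by
      rw [Finset.mem_coe, Finset.mem_range, Nat.lt_succ_iff]
      simpa using (Finset.card_le_univ K).trans_eq (by simp))]
  apply Finset.sum_congr rfl
  intro k hk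
  by_cases hguard : 2 ≤ r - 2 * k ∧ r - 2 * k ≤ L + 1
  · rw [if_pos hguard]
    have : Finset.filter (fun K : Finset (Fin q) => K.card = k)
        (Finset.filter (fun K : Finset (Fin q) => 2 ≤ r - 2 * K.card ∧ r - 2 * K.card ≤ L + 1)
          Finset.univ) = Finset.powersetCard k (Finset.univ : Finset (Fin q)) := by
      ext K
      simp only [Finset.mem_filter, Finset.mem_univ, true_and,
        Finset.mem_powersetCard_univ]
      constructor
      · rintro ⟨_, h⟩; exact h
      · rintro h; exact ⟨by rw [h]; exact hguard, h⟩
    rw [this, Finset.card_powersetCard, Finset.card_univ, Fintype.card_fin]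
  · rw [if_neg hguard]
    have : Finset.filter (fun K : Finset (Fin q) => K.card = k)
        (Finset.filter (fun K : Finset (Fin q) => 2 ≤ r - 2 * K.card ∧ r - 2 * K.card ≤ L + 1)
          Finset.univ) = ∅ := by
      ext K
      simp only [Finset.mem_filter, Finset.mem_univ, true_and, Finset.notMem_empty,
        iff_false, not_and]
      intro h1 h2
      exact absurd (h2 ▸ h1) hguard
    rw [this, Finset.card_empty]


end MainCount

/-- Let `t ≥ 2`, `r = 2t` or `r = 2t + 1`, `2 ≤ s ≤ r`, `ℓ = 2s - 1`, and
`n ≥ 2r - 1`. Then there is a permutation `π` of `Fin n` with `|support π| = 2r - 1`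
whose cycle type consists of `r - s` parts equal to `2` and one part equal to `ℓ`, such
that `|N_3(π)| = ℓ · Σ_{i=1}^{s-1} C(r-s, t-i)` if `r = 2t` and
`|N_3(π)| = ℓ · Σ_{i=1}^{s-2} C(r-s, t-i)` if `r = 2t + 1` (terms with `i > t`, i.e.
negative lower index, are `0`, handled by the guard `i ≤ t`). -/
theorem stmt14 (n t r s : ℕ) (ht : 2 ≤ t) (hr : r = 2 * t ∨ r = 2 * t + 1)
    (hs2 : 2 ≤ s) (hsr : s ≤ r) (hn : 2 * r - 1 ≤ n) :
    ∃ π : Equiv.Perm (Fin n),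
      π.support.card = 2 * r - 1 ∧
      π.cycleType = Multiset.replicate (r - s) 2 + {2 * s - 1} ∧
      (N3 r π).card =
        (2 * s - 1) *
          (if r = 2 * t then
            ∑ i ∈ Finset.Icc 1 (s - 1),
              (if i ≤ t then Nat.choose (r - s) (t - i) else 0)
          else
            ∑ i ∈ Finset.Icc 1 (s - 2),
              (if i ≤ t then Nat.choose (r - s) (t - i) else 0)) := by
  have hrt : 4 ≤ r := by omega
  set q := r - s with hq
  set L := 2 * s - 3 with hL
  have hL2 : L + 2 = 2 * s - 1 := by omega
  have hn' : 2 * q + (L + 2) ≤ n := by omega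
  -- predicates
  set p₁ : Fin n → Prop := fun i => (i : ℕ) < 2 * q with hp₁
  set p₂ : Fin n → Prop := fun i => 2 * q ≤ (i : ℕ) ∧ (i : ℕ) < 2 * q + (L + 2) with hp₂
  -- charts
  refine ?_
  have f₁ : Fin q × Fin 2 ≃ {i : Fin n // p₁ i} :=
    { toFun := fun x => ⟨⟨2 * x.1.val + x.2.val, by have := x.1.isLt; have := x.2.isLt; omega⟩,
        by simp only [hp₁]; have := x.1.isLt; have := x.2.isLt; omega⟩
      invFun := fun y => (⟨y.val.val / 2, by have := y.prop; simp only [hp₁] at this; omega⟩,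
        ⟨y.val.val % 2, by omega⟩)
      left_inv := by
        rintro ⟨a, b⟩
        have := b.isLt
        ext <;> simp <;> omega
      right_inv := by
        rintro ⟨y, hy⟩
        ext
        simp
        omega }
  have f₂ : Fin (L + 2) ≃ {i : Fin n // p₂ i} :=
    { toFun := fun j => ⟨⟨2 * q + j.val, by have := j.isLt; omega⟩,
        by simp only [hp₂]; have := j.isLt; constructor <;> simp <;> omega⟩
      invFun := fun y => ⟨y.val.val - 2 * q, by have := y.prop; simp only [hp₂] at this; omega⟩
      left_inv := by
        rintro ⟨a, ha⟩
        ext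
        simp
      right_inv := by
        rintro ⟨y, hy⟩
        simp only [hp₂] at hy
        ext
        simp
        omega }
  have hdisj : ∀ x : Fin n, ¬ (p₁ x ∧ p₂ x) := by
    intro x
    simp only [hp₁, hp₂]
    omega
  set τ : Equiv.Perm (Fin q × Fin 2) := Equiv.prodCongr (Equiv.refl _) (finRotate 2) with hτ
  set a : Equiv.Perm (Fin n) := τ.extendDomain f₁ with ha
  set b : Equiv.Perm (Fin n) := (finRotate (L + 2)).extendDomain f₂ with hb
  have hab : a.Disjoint b := by
    intro x
    by_cases h1 : p₁ x
    · right
      exact Equiv.Perm.extendDomain_apply_not_subtype _ f₂ (fun h2 => hdisj x ⟨h1, h2⟩)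
    · left
      exact Equiv.Perm.extendDomain_apply_not_subtype _ f₁ h1
  set π : Equiv.Perm (Fin n) := a * b with hπ
  have hτsq : τ * τ = 1 := by
    ext x
    · simp [hτ]
    · simp [hτ, finRotate_succ_apply]
      rw [add_assoc]
      simp
  have hτsupp : τ.support = Finset.univ := by
    ext x
    simp only [Equiv.Perm.mem_support, Finset.mem_univ, iff_true, hτ]
    intro hc
    have : finRotate 2 x.2 = x.2 := congrArg Prod.snd hc
    rw [finRotate_succ_apply] at this
    omega
  have hτcard : τ.support.card = 2 * q := by
    rw [hτsupp, Finset.card_univ]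
    simp [mul_comm]
  have hτct : τ.cycleType = Multiset.replicate q 2 := cycleType_of_sq_eq_one hτsq hτcard
  have hbct : b.cycleType = {2 * s - 1} := by
    rw [hb, Equiv.Perm.cycleType_extendDomain, cycleType_finRotate, hL2]
  have hact : a.cycleType = Multiset.replicate q 2 := by
    rw [ha, Equiv.Perm.cycleType_extendDomain, hτct]
  refine ⟨π, ?_, ?_, ?_⟩
  · rw [hπ, hab.card_support_mul]
    rw [ha, hb, Equiv.Perm.card_support_extend_domain, Equiv.Perm.card_support_extend_domain,
      hτcard, support_finRotate, Finset.card_univ, Fintype.card_fin]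
    omega
  · rw [hπ, Equiv.Perm.Disjoint.cycleType_mul hab, hact, hbct]
  · have hπ1 : ∀ (j : Fin q) (i : Fin 2), π (f₁ (j, i)) = ↑(f₁ (j, i + 1)) := by
      intro j i
      have hb' : b ↑(f₁ (j, i)) = ↑(f₁ (j, i)) :=
        Equiv.Perm.extendDomain_apply_not_subtype _ f₂
          (fun h2 => hdisj _ ⟨(f₁ (j, i)).prop, h2⟩)
      rw [hπ, Equiv.Perm.mul_apply, hb', ha, Equiv.Perm.extendDomain_apply_image]
      congr 2
      simp [hτ, finRotate_succ_apply]
    have hπ2 : ∀ j : Fin (L + 2), π (f₂ j) = ↑(f₂ (j + 1)) := by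
      intro j
      rw [hπ, Equiv.Perm.mul_apply, hb, Equiv.Perm.extendDomain_apply_image]
      rw [finRotate_succ_apply]
      exact Equiv.Perm.extendDomain_apply_not_subtype _ f₁
        (fun h1 => hdisj _ ⟨h1, (f₂ (j + 1)).prop⟩)
    have hπfix : ∀ x : Fin n, ¬ p₁ x → ¬ p₂ x → π x = x := by
      intro x h1 h2
      rw [hπ, Equiv.Perm.mul_apply, Equiv.Perm.extendDomain_apply_not_subtype _ f₂ h2,
        Equiv.Perm.extendDomain_apply_not_subtype _ f₁ h1]
    rw [main_count π f₁ f₂ hπ1 hπ2 hπfix hdisj (by omega)]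
    have hext : ∑ k ∈ Finset.range (q + 1),
          (if 2 ≤ r - 2 * k ∧ r - 2 * k ≤ L + 1 then Nat.choose q k else 0)
        = ∑ k ∈ Finset.range (q + t + 1),
          (if 2 ≤ r - 2 * k ∧ r - 2 * k ≤ L + 1 then Nat.choose q k else 0) := by
      apply Finset.sum_subset
      · apply Finset.range_subset_range.2; omega
      · intro k _ hk
        rw [Finset.mem_range, not_lt] at hk
        have : Nat.choose q k = 0 := Nat.choose_eq_zero_of_lt (by omega)
        simp [this]
    rw [hext, hL2]
    congr 1
    rcases hr with hcase | hcase
    · rw [if_pos hcase]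
      rw [← Finset.sum_filter, ← Finset.sum_filter]
      apply Finset.sum_nbij' (fun k => t - k) (fun i => t - i)
      · intro k hk
        simp only [Finset.mem_filter, Finset.mem_range] at hk
        simp only [Finset.mem_filter, Finset.mem_Icc]
        omega
      · intro i hi
        simp only [Finset.mem_filter, Finset.mem_Icc] at hi
        simp only [Finset.mem_filter, Finset.mem_range]
        omega
      · intro k hk
        simp only [Finset.mem_filter, Finset.mem_range] at hk
        omega
      · intro i hi
        simp only [Finset.mem_filter, Finset.mem_Icc] at hi
        omega
      · intro k hk
        simp only [Finset.mem_filter, Finset.mem_range] at hk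
        congr 1
        omega
    · rw [if_neg (by omega)]
      rw [← Finset.sum_filter, ← Finset.sum_filter]
      apply Finset.sum_nbij' (fun k => t - k) (fun i => t - i)
      · intro k hk
        simp only [Finset.mem_filter, Finset.mem_range] at hk
        simp only [Finset.mem_filter, Finset.mem_Icc]
        omega
      · intro i hi
        simp only [Finset.mem_filter, Finset.mem_Icc] at hi
        simp only [Finset.mem_filter, Finset.mem_range]
        omega
      · intro k hk
        simp only [Finset.mem_filter, Finset.mem_range] at hk
        omega
      · intro i hi
        simp only [Finset.mem_filter, Finset.mem_Icc] at hi
        omega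
      · intro k hk
        simp only [Finset.mem_filter, Finset.mem_range] at hk
        congr 1
        omega
end

section
/- Let t ≥ 2, let r = 2t or r = 2t + 1, and let n ≥ 2r − 1. Then there exist permutations π, τ of Fin n with d(π, τ) = 2r − 1 such that |B_r(π) ∩ B_r(τ)| ≥ 2·C(2t−3, t) + ℓ*·C(2t−2, t−1), where ℓ* = 5 if r = 2t and ℓ* = 7 if r = 2t + 1. In particular I(n, 2r−1, r) ≥ 2·C(2t−3, t) + ℓ*·C(2t−2, t−1). -/
/-- The Hamming distance between two permutations of `Fin n`. -/
def hdist {n : ℕ} (π τ : Equiv.Perm (Fin n)) : ℕ :=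
  (Finset.univ.filter fun i => π i ≠ τ i).card

/-- The metric ball of radius `r` centered at `π` for the Hamming distance. -/
def pball {n : ℕ} (π : Equiv.Perm (Fin n)) (r : ℕ) : Finset (Equiv.Perm (Fin n)) :=
  Finset.univ.filter fun σ => hdist π σ ≤ r

/-- `I(n, d, r)`: the maximum of `|B_r(π) ∩ B_r(τ)|` over pairs of permutations of
`Fin n` at Hamming distance exactly `d`. -/
def Imax (n d r : ℕ) : ℕ :=
  (Finset.univ.filter fun p : Equiv.Perm (Fin n) × Equiv.Perm (Fin n) =>
      hdist p.1 p.2 = d).sup fun p => (pball p.1 r ∩ pball p.2 r).card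


open Finset Equiv

section Helpers

lemma fin2_add : ∀ b : Fin 2, b + 1 + 1 = b := by decide
lemma fin2_ne : ∀ b : Fin 2, b + 1 ≠ b := by decide

/-- Swap the second coordinate of pairs whose first coordinate lies in `S`. -/
def tswap {m : ℕ} (S : Finset (Fin m)) : Equiv.Perm (Fin m × Fin 2) where
  toFun p := if p.1 ∈ S then (p.1, p.2 + 1) else p
  invFun p := if p.1 ∈ S then (p.1, p.2 + 1) else p
  left_inv p := by rcases p with ⟨j, b⟩; by_cases h : j ∈ S <;> simp [h, fin2_add]
  right_inv p := by rcases p with ⟨j, b⟩; by_cases h : j ∈ S <;> simp [h, fin2_add]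

lemma tswap_ne_iff {m : ℕ} (S S' : Finset (Fin m)) (p : Fin m × Fin 2) :
    tswap S p ≠ tswap S' p ↔ ¬(p.1 ∈ S ↔ p.1 ∈ S') := by
  rcases p with ⟨j, b⟩
  by_cases h : j ∈ S <;> by_cases h' : j ∈ S' <;>
    simp [tswap, h, h', Prod.ext_iff, fin2_ne b]

lemma card_filter_sum {α β : Type*} [Fintype α] [Fintype β] (P : α ⊕ β → Prop) [DecidablePred P] :
    (univ.filter P).card
      = (univ.filter fun a => P (Sum.inl a)).card + (univ.filter fun b => P (Sum.inr b)).card := by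
  simp only [Finset.card_filter]
  exact Fintype.sum_sum_type _

lemma card_filter_prod {α β : Type*} [Fintype α] [Fintype β] (P : α → Prop) [DecidablePred P] :
    (univ.filter fun p : α × β => P p.1).card = (univ.filter P).card * Fintype.card β := by
  simp only [Finset.card_filter, Fintype.sum_prod_type]
  rw [Finset.sum_mul]
  refine Finset.sum_congr rfl fun x _ => ?_
  by_cases h : P x <;> simp [h, Finset.card_univ]

/-- Conjugate of `d` by the `i`-th power of the rotation. -/
def cyc {c : ℕ} (i : Fin c) (d : Equiv.Perm (Fin c)) : Equiv.Perm (Fin c) :=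
  (finRotate c) ^ (i : ℕ) * d * ((finRotate c) ^ (i : ℕ))⁻¹

/-- The structured permutation on the decomposed index type. -/
def sigA {m c K : ℕ} (S : Finset (Fin m)) (dc : Equiv.Perm (Fin c)) :
    Equiv.Perm ((Fin m × Fin 2) ⊕ (Fin c ⊕ Fin K)) :=
  Equiv.sumCongr (tswap S) (Equiv.sumCongr dc 1)

/-- Transported to `Fin n`. -/
def sigP {n m c K : ℕ} (e : ((Fin m × Fin 2) ⊕ (Fin c ⊕ Fin K)) ≃ Fin n)
    (S : Finset (Fin m)) (dc : Equiv.Perm (Fin c)) : Equiv.Perm (Fin n) :=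
  e.permCongr (sigA S dc)

lemma hdist_sigP {n m c K : ℕ} (e : ((Fin m × Fin 2) ⊕ (Fin c ⊕ Fin K)) ≃ Fin n)
    (S S' : Finset (Fin m)) (dc dc' : Equiv.Perm (Fin c)) :
    hdist (sigP e S dc) (sigP e S' dc')
      = 2 * (univ.filter fun j => ¬(j ∈ S ↔ j ∈ S')).card
        + (univ.filter fun y => dc y ≠ dc' y).card := by
  unfold hdist
  have step1 : (univ.filter fun i : Fin n => sigP e S dc i ≠ sigP e S' dc' i).card
      = (univ.filter fun x => sigA (K := K) S dc x ≠ sigA S' dc' x).card := by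
    refine Finset.card_nbij' e.symm e ?_ ?_ ?_ ?_
    · intro a ha
      simp only [Finset.mem_coe, mem_filter, mem_univ, true_and] at *
      intro hEq
      exact ha (by simp only [sigP, Equiv.permCongr_apply, hEq])
    · intro x hx
      simp only [Finset.mem_coe, mem_filter, mem_univ, true_and] at *
      intro hEq
      apply hx
      have : sigA (K := K) S dc (e.symm (e x)) = sigA S' dc' (e.symm (e x)) :=
        e.injective (by simpa [sigP, Equiv.permCongr_apply] using hEq)
      simpa using this
    · intro a _; exact e.apply_symm_apply a
    · intro a _; exact e.symm_apply_apply a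
  rw [step1, card_filter_sum, card_filter_sum]
  have h1 : (univ.filter fun a : Fin m × Fin 2 =>
      sigA (K := K) S dc (Sum.inl a) ≠ sigA S' dc' (Sum.inl a)).card
      = 2 * (univ.filter fun j => ¬(j ∈ S ↔ j ∈ S')).card := by
    have heq : (univ.filter fun a : Fin m × Fin 2 =>
        sigA (K := K) S dc (Sum.inl a) ≠ sigA S' dc' (Sum.inl a))
        = univ.filter fun a : Fin m × Fin 2 => ¬(a.1 ∈ S ↔ a.1 ∈ S') := by
      refine Finset.filter_congr fun a _ => ?_
      simp only [sigA, Equiv.sumCongr_apply, Sum.map_inl, ne_eq, Sum.inl.injEq]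
      exact tswap_ne_iff S S' a
    rw [heq, card_filter_prod (fun j : Fin m => ¬(j ∈ S ↔ j ∈ S'))]
    simp [mul_comm]
  have h2 : (univ.filter fun y : Fin c =>
      sigA (K := K) S dc (Sum.inr (Sum.inl y)) ≠ sigA S' dc' (Sum.inr (Sum.inl y))).card
      = (univ.filter fun y => dc y ≠ dc' y).card := by
    refine congrArg _ (Finset.filter_congr fun y _ => ?_)
    simp [sigA]
  have h3 : (univ.filter fun z : Fin K =>
      sigA (K := K) S dc (Sum.inr (Sum.inr z)) ≠ sigA S' dc' (Sum.inr (Sum.inr z))).card = 0 := by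
    refine Finset.card_eq_zero.mpr ?_
    refine Finset.filter_false_of_mem fun z _ => ?_
    simp [sigA]
  rw [h1, h2, h3]
  omega

lemma sigP_inj {n m c K : ℕ} (e : ((Fin m × Fin 2) ⊕ (Fin c ⊕ Fin K)) ≃ Fin n)
    {S S' : Finset (Fin m)} {dc dc' : Equiv.Perm (Fin c)}
    (h : sigP e S dc = sigP e S' dc') : S = S' ∧ dc = dc' := by
  have hA : sigA (K := K) S dc = sigA S' dc' := (Equiv.permCongr e).injective h
  constructor
  · ext j
    have h0 := Equiv.ext_iff.mp hA (Sum.inl (j, 0))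
    simp only [sigA, Equiv.sumCongr_apply, Sum.map_inl, Sum.inl.injEq] at h0
    have h2 := tswap_ne_iff S S' (j, 0)
    by_contra hne
    exact (h2.mpr (by simpa using hne)) h0
  · ext y
    have h0 := Equiv.ext_iff.mp hA (Sum.inr (Sum.inl y))
    have : dc y = dc' y := by simpa [sigA] using h0
    exact congrArg Fin.val this

end Helpers

section Families

variable {n m c K : ℕ} (e : ((Fin m × Fin 2) ⊕ (Fin c ⊕ Fin K)) ≃ Fin n)

/-- A family of permutations in the intersection of balls. -/
def famF (k' : ℕ) (I : Finset (Fin c)) (d : Equiv.Perm (Fin c)) : Finset (Equiv.Perm (Fin n)) :=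
  ((Finset.powersetCard k' Finset.univ) ×ˢ I).image fun p => sigP e p.1 (cyc p.2 d)

lemma famF_card (k' : ℕ) (I : Finset (Fin c)) (d : Equiv.Perm (Fin c))
    (hI : ∀ i ∈ I, ∀ i' ∈ I, cyc i d = cyc i' d → i = i') :
    (famF e k' I d).card = Nat.choose m k' * I.card := by
  have hinj : Set.InjOn (fun p : Finset (Fin m) × Fin c => sigP e p.1 (cyc p.2 d))
      (((Finset.powersetCard k' Finset.univ) ×ˢ I : Finset (Finset (Fin m) × Fin c)) : Set (Finset (Fin m) × Fin c)) := by
    intro p hp q hq hpq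
    simp only [Finset.coe_product, Set.mem_prod, Finset.mem_coe] at hp hq
    obtain ⟨hS, hdc⟩ := sigP_inj e hpq
    exact Prod.ext hS (hI _ hp.2 _ hq.2 hdc)
  rw [famF, Finset.card_image_of_injOn hinj, Finset.card_product,
    Finset.card_powersetCard, Finset.card_univ, Fintype.card_fin]

lemma famF_subset (k' : ℕ) (I : Finset (Fin c)) (d : Equiv.Perm (Fin c)) (cnt1 cnt2 r : ℕ)
    (h1 : ∀ i, (univ.filter fun y => (1 : Equiv.Perm (Fin c)) y ≠ cyc i d y).card = cnt1)
    (h2 : ∀ i, (univ.filter fun y => finRotate c y ≠ cyc i d y).card = cnt2)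
    (hb : I.Nonempty → k' ≤ m → 2 * k' + cnt1 ≤ r ∧ 2 * (m - k') + cnt2 ≤ r) :
    famF e k' I d ⊆ pball (sigP e ∅ 1) r ∩ pball (sigP e Finset.univ (finRotate c)) r := by
  intro σ hσ
  simp only [famF, Finset.mem_image, Finset.mem_product, Finset.mem_powersetCard] at hσ
  obtain ⟨⟨S, i⟩, ⟨⟨hSsub, hScard⟩, hiI⟩, rfl⟩ := hσ
  have hkm : k' ≤ m := by
    rw [← hScard]
    calc S.card ≤ (Finset.univ : Finset (Fin m)).card := Finset.card_le_card hSsub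
      _ = m := by rw [Finset.card_univ, Fintype.card_fin]
  obtain ⟨hb1, hb2⟩ := hb ⟨i, hiI⟩ hkm
  have e1 : hdist (sigP e ∅ 1) (sigP e S (cyc i d)) = 2 * k' + cnt1 := by
    rw [hdist_sigP, h1 i]
    have hf : (univ.filter fun j => ¬(j ∈ (∅ : Finset (Fin m)) ↔ j ∈ S)) = S := by
      ext j; simp
    rw [hf, hScard]
  have e2 : hdist (sigP e Finset.univ (finRotate c)) (sigP e S (cyc i d))
      = 2 * (m - k') + cnt2 := by
    rw [hdist_sigP, h2 i]
    have hf : (univ.filter fun j => ¬(j ∈ (Finset.univ : Finset (Fin m)) ↔ j ∈ S)) = Sᶜ := by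
      ext j; simp
    rw [hf, Finset.card_compl, hScard, Fintype.card_fin]
  refine Finset.mem_inter.mpr ⟨?_, ?_⟩
  · simp only [pball, Finset.mem_filter, Finset.mem_univ, true_and]
    omega
  · simp only [pball, Finset.mem_filter, Finset.mem_univ, true_and]
    omega

lemma famF_disj (k k' : ℕ) (I I' : Finset (Fin c)) (d d' : Equiv.Perm (Fin c))
    (h : ∀ i i', cyc i d ≠ cyc i' d') :
    Disjoint (famF e k I d) (famF e k' I' d') := by
  rw [Finset.disjoint_left]
  intro σ h1 h2
  simp only [famF, Finset.mem_image] at h1 h2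
  obtain ⟨⟨S, i⟩, _, rfl⟩ := h1
  obtain ⟨⟨S', i'⟩, _, hEq⟩ := h2
  exact h i i' (sigP_inj e hEq.symm).2

end Families

set_option maxHeartbeats 1000000 in
lemma construct (n t r c : ℕ) (da db : Equiv.Perm (Fin c)) (i0 : Fin c)
    (ca1 ca2 cb1 cb2 : ℕ) (N : ℕ)
    (ht : 2 ≤ t) (hrc : 2 * (2 * t - 3) + c = 2 * r - 1) (hn : 2 * r - 1 ≤ n)
    (hrot0 : (univ.filter fun y => (1 : Equiv.Perm (Fin c)) y ≠ finRotate c y).card = c)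
    (h11 : ∀ i : Fin c, (univ.filter fun y =>
      (1 : Equiv.Perm (Fin c)) y ≠ cyc i (1 : Equiv.Perm (Fin c)) y).card = 0)
    (h12 : ∀ i : Fin c, (univ.filter fun y =>
      finRotate c y ≠ cyc i (1 : Equiv.Perm (Fin c)) y).card = c)
    (h21 : ∀ i : Fin c, (univ.filter fun y =>
      (1 : Equiv.Perm (Fin c)) y ≠ cyc i (finRotate c) y).card = c)
    (h22 : ∀ i : Fin c, (univ.filter fun y =>
      finRotate c y ≠ cyc i (finRotate c) y).card = 0)
    (ha1 : ∀ i : Fin c, (univ.filter fun y =>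
      (1 : Equiv.Perm (Fin c)) y ≠ cyc i da y).card = ca1)
    (ha2 : ∀ i : Fin c, (univ.filter fun y => finRotate c y ≠ cyc i da y).card = ca2)
    (hb1 : ∀ i : Fin c, (univ.filter fun y =>
      (1 : Equiv.Perm (Fin c)) y ≠ cyc i db y).card = cb1)
    (hb2 : ∀ i : Fin c, (univ.filter fun y => finRotate c y ≠ cyc i db y).card = cb2)
    (hainj : ∀ i i' : Fin c, cyc i da = cyc i' da → i = i')
    (hbinj : ∀ i i' : Fin c, cyc i db = cyc i' db → i = i')
    (hd12 : ∀ i i' : Fin c, cyc i (1 : Equiv.Perm (Fin c)) ≠ cyc i' (finRotate c))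
    (hd13 : ∀ i i' : Fin c, cyc i (1 : Equiv.Perm (Fin c)) ≠ cyc i' da)
    (hd14 : ∀ i i' : Fin c, cyc i (1 : Equiv.Perm (Fin c)) ≠ cyc i' db)
    (hd23 : ∀ i i' : Fin c, cyc i (finRotate c) ≠ cyc i' da)
    (hd24 : ∀ i i' : Fin c, cyc i (finRotate c) ≠ cyc i' db)
    (hd34 : ∀ i i' : Fin c, cyc i da ≠ cyc i' db)
    (hq1 : t ≤ 2 * t - 3 → 2 * t + 0 ≤ r ∧ 2 * (2 * t - 3 - t) + c ≤ r)
    (hq2 : 3 ≤ t → 2 * (t - 3) + c ≤ r ∧ 2 * (2 * t - 3 - (t - 3)) + 0 ≤ r)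
    (hq3 : 2 * (t - 1) + ca1 ≤ r ∧ 2 * (2 * t - 3 - (t - 1)) + ca2 ≤ r)
    (hq4 : 2 * (t - 2) + cb1 ≤ r ∧ 2 * (2 * t - 3 - (t - 2)) + cb2 ≤ r)
    (hN : N ≤ Nat.choose (2 * t - 3) t
        + (if 3 ≤ t then Nat.choose (2 * t - 3) (t - 3) else 0)
        + Nat.choose (2 * t - 3) (t - 1) * c + Nat.choose (2 * t - 3) (t - 2) * c) :
    (∃ π τ : Equiv.Perm (Fin n), hdist π τ = 2 * r - 1 ∧
        N ≤ (pball π r ∩ pball τ r).card) ∧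
      N ≤ Imax n (2 * r - 1) r := by
  have hcard : Fintype.card ((Fin (2 * t - 3) × Fin 2) ⊕ (Fin c ⊕ Fin (n - (2 * (2 * t - 3) + c)))) = n := by
    simp only [Fintype.card_sum, Fintype.card_prod, Fintype.card_fin]
    omega
  set e := Fintype.equivFinOfCardEq hcard with he
  set π := sigP e (∅ : Finset (Fin (2 * t - 3))) 1 with hπ
  set τ := sigP e Finset.univ (finRotate c) with hτ
  have hdπτ : hdist π τ = 2 * r - 1 := by
    rw [hπ, hτ, hdist_sigP, hrot0]
    have hf : (univ.filter fun j =>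
        ¬(j ∈ (∅ : Finset (Fin (2 * t - 3))) ↔ j ∈ (Finset.univ : Finset (Fin (2 * t - 3)))))
        = Finset.univ := by ext j; simp
    rw [hf, Finset.card_univ, Fintype.card_fin]
    omega
  set G1 := famF e t {i0} 1 with hG1
  set G2 := famF e (t - 3) (if 3 ≤ t then {i0} else ∅) (finRotate c) with hG2
  set G3 := famF e (t - 1) Finset.univ da with hG3
  set G4 := famF e (t - 2) Finset.univ db with hG4
  have hsub : G1 ∪ G2 ∪ G3 ∪ G4 ⊆ pball π r ∩ pball τ r := by
    refine Finset.union_subset (Finset.union_subset (Finset.union_subset ?_ ?_) ?_) ?_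
    · exact famF_subset e t {i0} 1 0 c r h11 h12 (fun _ hkm => hq1 hkm)
    · refine famF_subset e (t - 3) _ (finRotate c) c 0 r h21 h22 (fun hne _ => ?_)
      by_cases h3 : 3 ≤ t
      · exact hq2 h3
      · simp [h3] at hne
    · exact famF_subset e (t - 1) Finset.univ da ca1 ca2 r ha1 ha2 (fun _ _ => hq3)
    · exact famF_subset e (t - 2) Finset.univ db cb1 cb2 r hb1 hb2 (fun _ _ => hq4)
  have hc1 : G1.card = Nat.choose (2 * t - 3) t := by
    rw [hG1, famF_card e t {i0} 1 (fun i hi i' hi' _ => by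
      simp only [Finset.mem_singleton] at hi hi'; rw [hi, hi'])]
    simp
  have hc2 : G2.card = (if 3 ≤ t then Nat.choose (2 * t - 3) (t - 3) else 0) := by
    rw [hG2, famF_card e (t - 3) _ (finRotate c) (fun i hi i' hi' _ => by
      by_cases h3 : 3 ≤ t <;> simp [h3] at hi hi' <;> first | (rw [hi, hi']) | exact absurd hi (by simp))]
    by_cases h3 : 3 ≤ t <;> simp [h3]
  have hc3 : G3.card = Nat.choose (2 * t - 3) (t - 1) * c := by
    rw [hG3, famF_card e (t - 1) Finset.univ da (fun i _ i' _ h => hainj i i' h),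
      Finset.card_univ, Fintype.card_fin]
  have hc4 : G4.card = Nat.choose (2 * t - 3) (t - 2) * c := by
    rw [hG4, famF_card e (t - 2) Finset.univ db (fun i _ i' _ h => hbinj i i' h),
      Finset.card_univ, Fintype.card_fin]
  have hd_12 : Disjoint G1 G2 := famF_disj e _ _ _ _ _ _ hd12
  have hd_3 : Disjoint (G1 ∪ G2) G3 :=
    Finset.disjoint_union_left.mpr ⟨famF_disj e _ _ _ _ _ _ hd13, famF_disj e _ _ _ _ _ _ hd23⟩
  have hd_4 : Disjoint (G1 ∪ G2 ∪ G3) G4 :=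
    Finset.disjoint_union_left.mpr ⟨Finset.disjoint_union_left.mpr
      ⟨famF_disj e _ _ _ _ _ _ hd14, famF_disj e _ _ _ _ _ _ hd24⟩,
      famF_disj e _ _ _ _ _ _ hd34⟩
  have hcardU : (G1 ∪ G2 ∪ G3 ∪ G4).card
      = G1.card + G2.card + G3.card + G4.card := by
    rw [Finset.card_union_of_disjoint hd_4, Finset.card_union_of_disjoint hd_3,
      Finset.card_union_of_disjoint hd_12]
  have hNle : N ≤ (pball π r ∩ pball τ r).card := by
    calc N ≤ G1.card + G2.card + G3.card + G4.card := by rw [hc1, hc2, hc3, hc4]; exact hN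
      _ = (G1 ∪ G2 ∪ G3 ∪ G4).card := hcardU.symm
      _ ≤ (pball π r ∩ pball τ r).card := Finset.card_le_card hsub
  refine ⟨⟨π, τ, hdπτ, hNle⟩, ?_⟩
  have hmem : (π, τ) ∈ (Finset.univ.filter fun p : Equiv.Perm (Fin n) × Equiv.Perm (Fin n) =>
      hdist p.1 p.2 = 2 * r - 1) := Finset.mem_filter.mpr ⟨Finset.mem_univ _, hdπτ⟩
  have hle := Finset.le_sup (α := ℕ) (f := fun p : Equiv.Perm (Fin n) × Equiv.Perm (Fin n) =>
      (pball p.1 r ∩ pball p.2 r).card) hmem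
  exact le_trans hNle hle

lemma arith (t c : ℕ) (ht : 2 ≤ t) :
    2 * Nat.choose (2 * t - 3) t + c * Nat.choose (2 * t - 2) (t - 1)
      ≤ Nat.choose (2 * t - 3) t + (if 3 ≤ t then Nat.choose (2 * t - 3) (t - 3) else 0)
        + Nat.choose (2 * t - 3) (t - 1) * c + Nat.choose (2 * t - 3) (t - 2) * c := by
  obtain ⟨s, rfl⟩ : ∃ s, t = s + 2 := ⟨t - 2, by omega⟩
  cases s with
  | zero => norm_num [Nat.choose]; omega
  | succ u =>
    have h3 : 3 ≤ u + 1 + 2 := by omega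
    rw [if_pos h3]
    rw [show 2 * (u + 1 + 2) - 3 = 2 * u + 3 from by omega,
      show 2 * (u + 1 + 2) - 2 = 2 * u + 4 from by omega,
      show u + 1 + 2 - 1 = u + 2 from by omega,
      show u + 1 + 2 - 2 = u + 1 from by omega,
      show u + 1 + 2 - 3 = u from by omega]
    have hsymm : Nat.choose (2 * u + 3) (u + 1 + 2) = Nat.choose (2 * u + 3) u := by
      have h := Nat.choose_symm (n := 2 * u + 3) (k := u + 3) (by omega)
      rw [show 2 * u + 3 - (u + 3) = u from by omega] at h
      rw [show u + 1 + 2 = u + 3 from by omega]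
      exact h.symm
    have hpas : Nat.choose (2 * u + 4) (u + 2)
        = Nat.choose (2 * u + 3) (u + 1) + Nat.choose (2 * u + 3) (u + 2) :=
      Nat.choose_succ_succ (2 * u + 3) (u + 1)
    rw [hsymm, hpas]
    exact le_of_eq (by ring)

def d52 : Equiv.Perm (Fin 5) := Equiv.swap 0 1
def d54 : Equiv.Perm (Fin 5) := finRotate 5 * Equiv.swap 3 4
def d73 : Equiv.Perm (Fin 7) := Equiv.swap 0 2 * Equiv.swap 0 1
def d75 : Equiv.Perm (Fin 7) :=
  Equiv.swap 0 4 * Equiv.swap 0 3 * Equiv.swap 0 2 * Equiv.swap 0 1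


set_option maxRecDepth 40000 in
/-- Let `t ≥ 2`, `r = 2t` or `r = 2t + 1`, `n ≥ 2r - 1`. Then there exist
permutations `π`, `τ` of `Fin n` with `d(π, τ) = 2r - 1` and
`|B_r(π) ∩ B_r(τ)| ≥ 2·C(2t-3, t) + ℓ*·C(2t-2, t-1)`, where `ℓ* = 5` if `r = 2t` and
`ℓ* = 7` if `r = 2t + 1`. In particular
`I(n, 2r-1, r) ≥ 2·C(2t-3, t) + ℓ*·C(2t-2, t-1)`. -/
theorem stmt17 (n t r : ℕ) (ht : 2 ≤ t) (hr : r = 2 * t ∨ r = 2 * t + 1)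
    (hn : 2 * r - 1 ≤ n) :
    (∃ π τ : Equiv.Perm (Fin n), hdist π τ = 2 * r - 1 ∧
      2 * Nat.choose (2 * t - 3) t +
          (if r = 2 * t then 5 else 7) * Nat.choose (2 * t - 2) (t - 1) ≤
        (pball π r ∩ pball τ r).card) ∧
    2 * Nat.choose (2 * t - 3) t +
        (if r = 2 * t then 5 else 7) * Nat.choose (2 * t - 2) (t - 1) ≤
      Imax n (2 * r - 1) r := by
  rcases hr with hcase | hcase
  · subst hcase
    rw [show (if 2 * t = 2 * t then (5 : ℕ) else 7) = 5 from if_pos rfl]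
    exact construct n t (2 * t) 5 d52 d54 0 2 4 4 2 _ ht (by omega) hn
      (by decide) (by decide) (by decide) (by decide) (by decide) (by decide) (by decide)
      (by decide) (by decide) (by decide) (by decide) (by decide) (by decide) (by decide)
      (by decide) (by decide) (by decide)
      (fun h => by omega) (fun h => by omega) (by omega) (by omega)
      (arith t 5 ht)
  · subst hcase
    rw [show (if 2 * t + 1 = 2 * t then (5 : ℕ) else 7) = 7 from if_neg (by omega)]
    exact construct n t (2 * t + 1) 7 d73 d75 0 3 5 5 3 _ ht (by omega) hn
      (by decide) (by decide) (by decide) (by decide) (by decide) (by decide) (by decide)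
      (by decide) (by decide) (by decide) (by decide) (by decide) (by decide) (by decide)
      (by decide) (by decide) (by decide)
      (fun h => by omega) (fun h => by omega) (by omega) (by omega)
      (arith t 7 ht)
end
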